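/- If ρ ∈ L^{6/5}(ℝ³), then the Coulomb self-energy D(ρ,ρ) = (1/2)∫∫ |ρ(x)||ρ(y)|/|x−y| dx dy is finite, and D(ρ,ρ) ≤ C‖ρ‖_{L^{6/5}}² for a universal constant C. -/

import Mathlib

open MeasureTheory Real Filter ENNReal

noncomputable section

abbrev E3 := EuclideanSpace ℝ (Fin 3)

/-!
Cut `|ρ|` into dyadic layers `E_i = {2^i ≤ |ρ| < 2^(i+1)}`. For sets, comparing `B` with the ball
of the same volume around `x` (dyadic annuli inside it, the trivial bound outside) gives
`∫_A ∫_B |x - y|⁻¹ ≤ C |A| |B|^(2/3)`. With `a_i = 2^(6i/5) |E_i|`, so that `∑ a_i ≤ ∫ |ρ|^(6/5)`,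
and the exponent `2/3` put on the lower layer, the pair `(E_i, E_j)`, `i ≤ j`, contributes at most
`C 2^(-(j-i)/5) a_i^(2/3) a_j`; the geometric decay in `j - i` sums this to
`C (∑ a_i)^(5/3) ≤ C ‖ρ‖_(6/5)^2`. The argument works on any metric measure space with
`μ(B(y, r)) ≤ V r^d` and for the kernel `|x - y|^(-s)`, `0 < s < d`; here `d = 3` and `s = 1`.
-/

open Metric Set
open scoped NNReal

def IsUpperAhlforsRegular {X : Type*} [PseudoMetricSpace X] [MeasurableSpace X] (μ : Measure X)
    (V : ℝ≥0) (d : ℝ) : Prop :=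
  ∀ y r, 0 < r → μ (closedBall y r) ≤ V * ENNReal.ofReal r ^ d

theorem closedBall_subset_insert_iUnion_annulus {X : Type*} [MetricSpace X] (y : X) (r : ℝ) :
    closedBall y r
      ⊆ insert y (⋃ k : ℕ, closedBall y (r / 2 ^ k) \ closedBall y (r / 2 ^ k / 2)) := by
  intro x hx
  rcases eq_or_ne x y with rfl | hxy
  · exact mem_insert _ _
  have hd : 0 < dist x y := dist_pos.2 hxy
  obtain ⟨k, hk, hk'⟩ := exists_nat_pow_near (one_le_div hd |>.2 (mem_closedBall.1 hx))
    one_lt_two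
  refine mem_insert_of_mem _ (mem_iUnion.2 ⟨k, ?_, ?_⟩)
  · rw [mem_closedBall, le_div_iff₀ (by positivity)]
    rwa [le_div_iff₀ hd, mul_comm] at hk
  · rw [mem_closedBall, not_le, div_div, ← pow_succ, div_lt_iff₀ (by positivity)]
    rwa [div_lt_iff₀ hd, mul_comm] at hk'

section MetricMeasureSpace

variable {X : Type*} [MetricSpace X] [MeasurableSpace X] [OpensMeasurableSpace X]
  {μ : Measure X} {V : ℝ≥0} {d s : ℝ}

theorem setLIntegral_annulus_edist_rpow_neg_le (hμ : IsUpperAhlforsRegular μ V d) (hs : 0 ≤ s)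
    (y : X) {r : ℝ} (hr : 0 < r) :
    ∫⁻ x in closedBall y r \ closedBall y (r / 2), edist x y ^ (-s) ∂μ
      ≤ 2 ^ s * V * ENNReal.ofReal r ^ (d - s) := by
  have hr0 : ENNReal.ofReal r ≠ 0 := ENNReal.ofReal_ne_zero_iff.2 hr
  have hkernel : ∀ x ∈ closedBall y r \ closedBall y (r / 2),
      edist x y ^ (-s) ≤ 2 ^ s * (ENNReal.ofReal r ^ s)⁻¹ := by
    rintro x ⟨-, hx⟩
    have hlt : ENNReal.ofReal r / 2 ≤ edist x y := by
      rw [edist_dist, ← ENNReal.ofReal_ofNat 2, ← ENNReal.ofReal_div_of_pos two_pos]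
      exact ENNReal.ofReal_le_ofReal (not_le.1 hx).le
    calc edist x y ^ (-s) = (edist x y ^ s)⁻¹ := ENNReal.rpow_neg _ _
      _ ≤ ((ENNReal.ofReal r / 2) ^ s)⁻¹ := by gcongr
      _ = 2 ^ s * (ENNReal.ofReal r ^ s)⁻¹ := by
        rw [ENNReal.div_rpow_of_nonneg _ _ hs, ENNReal.div_eq_inv_mul, ENNReal.mul_inv (by simp)
          (by simp), inv_inv]
  calc ∫⁻ x in closedBall y r \ closedBall y (r / 2), edist x y ^ (-s) ∂μ
      ≤ ∫⁻ _ in closedBall y r \ closedBall y (r / 2), 2 ^ s * (ENNReal.ofReal r ^ s)⁻¹ ∂μ :=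
        setLIntegral_mono' (measurableSet_closedBall.diff measurableSet_closedBall) hkernel
    _ ≤ 2 ^ s * (ENNReal.ofReal r ^ s)⁻¹ * (V * ENNReal.ofReal r ^ d) := by
        rw [setLIntegral_const]
        gcongr
        exact (measure_mono sdiff_subset).trans (hμ y r hr)
    _ = 2 ^ s * V * ENNReal.ofReal r ^ (d - s) := by
        rw [ENNReal.rpow_sub _ _ hr0 ENNReal.ofReal_ne_top, ENNReal.div_eq_inv_mul]
        ring

theorem setLIntegral_closedBall_edist_rpow_neg_le [NullSingletonClass μ]
    (hμ : IsUpperAhlforsRegular μ V d) (hs : 0 ≤ s) (hsd : s < d) (y : X) {r : ℝ} (hr : 0 < r) :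
    ∫⁻ x in closedBall y r, edist x y ^ (-s) ∂μ
      ≤ 2 ^ s * (1 - 2 ^ (s - d))⁻¹ * V * ENNReal.ofReal r ^ (d - s) := by
  have hscale : ∀ k : ℕ, ENNReal.ofReal (r / 2 ^ k) ^ (d - s)
      = ENNReal.ofReal r ^ (d - s) * ((2 : ℝ≥0∞) ^ (s - d)) ^ k := by
    intro k
    rw [ENNReal.ofReal_div_of_pos (by positivity), ENNReal.div_eq_inv_mul,
      ENNReal.mul_rpow_of_nonneg _ _ (by linarith), mul_comm, ENNReal.ofReal_pow zero_le_two,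
      ENNReal.ofReal_ofNat, ← ENNReal.rpow_natCast, ENNReal.inv_rpow, ← ENNReal.rpow_mul,
      ← ENNReal.rpow_neg, ← ENNReal.rpow_natCast, ← ENNReal.rpow_mul]
    congr 2
    ring
  calc ∫⁻ x in closedBall y r, edist x y ^ (-s) ∂μ
      ≤ ∫⁻ x in ⋃ k : ℕ, closedBall y (r / 2 ^ k) \ closedBall y (r / 2 ^ k / 2),
          edist x y ^ (-s) ∂μ :=
        lintegral_mono_set' <| (LE.le.eventuallyLE
          (closedBall_subset_insert_iUnion_annulus y r)).trans (insert_ae_eq_self y _).le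
    _ ≤ ∑' k : ℕ, ∫⁻ x in closedBall y (r / 2 ^ k) \ closedBall y (r / 2 ^ k / 2),
          edist x y ^ (-s) ∂μ := lintegral_iUnion_le _ _
    _ ≤ ∑' k : ℕ, 2 ^ s * V * ENNReal.ofReal (r / 2 ^ k) ^ (d - s) :=
        ENNReal.tsum_le_tsum fun k => setLIntegral_annulus_edist_rpow_neg_le hμ hs y (by positivity)
    _ = 2 ^ s * (1 - 2 ^ (s - d))⁻¹ * V * ENNReal.ofReal r ^ (d - s) := by
        simp_rw [hscale, ← mul_assoc, ENNReal.tsum_mul_left, ENNReal.tsum_geometric]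
        ring

theorem setLIntegral_edist_rpow_neg_le_add [NullSingletonClass μ]
    (hμ : IsUpperAhlforsRegular μ V d) (hs : 0 ≤ s) (hsd : s < d) (S : Set X) (y : X) {r : ℝ}
    (hr : 0 < r) :
    ∫⁻ x in S, edist x y ^ (-s) ∂μ
      ≤ 2 ^ s * (1 - 2 ^ (s - d))⁻¹ * (V * ENNReal.ofReal r ^ (d - s))
        + (ENNReal.ofReal r ^ s)⁻¹ * μ S := by
  have hfar : ∀ x ∈ S \ closedBall y r, edist x y ^ (-s) ≤ (ENNReal.ofReal r ^ s)⁻¹ := by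
    rintro x ⟨-, hx⟩
    rw [ENNReal.rpow_neg, edist_dist]
    gcongr
    exact (not_le.1 hx).le
  rw [← lintegral_inter_add_sdiff _ S measurableSet_closedBall, ← mul_assoc]
  gcongr
  · exact (lintegral_mono_set inter_subset_right).trans
      (setLIntegral_closedBall_edist_rpow_neg_le hμ hs hsd y hr)
  · calc ∫⁻ x in S \ closedBall y r, edist x y ^ (-s) ∂μ
        ≤ ∫⁻ _ in S \ closedBall y r, (ENNReal.ofReal r ^ s)⁻¹ ∂μ :=
          setLIntegral_mono measurable_const hfar
      _ ≤ (ENNReal.ofReal r ^ s)⁻¹ * μ S := by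
          rw [setLIntegral_const]
          gcongr
          exact sdiff_subset

theorem setLIntegral_edist_rpow_neg_le [NullSingletonClass μ]
    (hμ : IsUpperAhlforsRegular μ V d) (hV : V ≠ 0) (hs : 0 ≤ s) (hsd : s < d) (S : Set X)
    (y : X) :
    ∫⁻ x in S, edist x y ^ (-s) ∂μ
      ≤ (2 ^ s * (1 - 2 ^ (s - d))⁻¹ + 1) * V ^ (s / d) * μ S ^ (1 - s / d) := by
  have hd : 0 < d := hs.trans_lt hsd
  rcases eq_or_ne (μ S) 0 with hS0 | hS0
  · simp [setLIntegral_measure_zero _ _ hS0]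
  rcases eq_or_ne (μ S) ⊤ with hStop | hStop
  · rw [hStop, ENNReal.top_rpow_of_pos (by bound), ENNReal.mul_top (by simp [hV])]
    exact le_top
  have hV0 : (V : ℝ≥0∞) ≠ 0 := by simpa using hV
  -- the radius of a ball of measure `μ S`, `V R^d = μ S`: there the near and far bounds balance
  set R : ℝ≥0∞ := (V : ℝ≥0∞) ^ (-d⁻¹) * μ S ^ d⁻¹
  have hR0 : R ≠ 0 := mul_ne_zero (by simp [hV]) (by simp [hS0, hStop])
  have hRtop : R ≠ ⊤ := ENNReal.mul_ne_top (by simp [hV]) (by simp [hS0, hStop])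
  have hnear : V * R ^ (d - s) = V ^ (s / d) * μ S ^ (1 - s / d) := by
    rw [ENNReal.mul_rpow_of_ne_zero (by simp [hV]) (by simp [hS0, hStop]), ← ENNReal.rpow_mul,
      ← ENNReal.rpow_mul, ← mul_assoc]
    nth_rewrite 1 [← ENNReal.rpow_one (V : ℝ≥0∞)]
    rw [← ENNReal.rpow_add _ _ hV0 ENNReal.coe_ne_top]
    congr 2 <;> field_simp
    ring
  have hfar : (R ^ s)⁻¹ * μ S = V ^ (s / d) * μ S ^ (1 - s / d) := by
    rw [← ENNReal.rpow_neg, ENNReal.mul_rpow_of_ne_zero (by simp [hV]) (by simp [hS0, hStop]),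
      ← ENNReal.rpow_mul, ← ENNReal.rpow_mul, mul_assoc]
    nth_rewrite 2 [← ENNReal.rpow_one (μ S)]
    rw [← ENNReal.rpow_add _ _ hS0 hStop]
    congr 2 <;> field_simp
    ring
  refine (setLIntegral_edist_rpow_neg_le_add hμ hs hsd S y
    (ENNReal.toReal_pos hR0 hRtop)).trans_eq ?_
  rw [ENNReal.ofReal_toReal hRtop, hnear, hfar]
  ring

theorem setLIntegral_prod_edist_rpow_neg_le [SFinite μ] [NullSingletonClass μ]
    (hμ : IsUpperAhlforsRegular μ V d) (hV : V ≠ 0) (hs : 0 ≤ s) (hsd : s < d) (A B : Set X) :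
    ∫⁻ z in A ×ˢ B, edist z.1 z.2 ^ (-s) ∂μ.prod μ
      ≤ (2 ^ s * (1 - 2 ^ (s - d))⁻¹ + 1) * V ^ (s / d) * μ A * μ B ^ (1 - s / d) := by
  rw [← Measure.prod_restrict]
  calc _ ≤ ∫⁻ x in A, ∫⁻ y in B, edist x y ^ (-s) ∂μ ∂μ := lintegral_prod_le _
    _ ≤ ∫⁻ _ in A, (2 ^ s * (1 - 2 ^ (s - d))⁻¹ + 1) * V ^ (s / d) * μ B ^ (1 - s / d) ∂μ :=
        lintegral_mono fun x => by
          simpa only [edist_comm x] using setLIntegral_edist_rpow_neg_le hμ hV hs hsd B x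
    _ = _ := by rw [setLIntegral_const]; ring

end MetricMeasureSpace

section DyadicLayers

variable {X : Type*} {f : X → ℝ≥0}

def dyadicLayer (f : X → ℝ≥0) (i : ℤ) : Set X := f ⁻¹' Ico (2 ^ i) (2 ^ (i + 1))

theorem measurableSet_dyadicLayer [MeasurableSpace X] (hf : Measurable f) (i : ℤ) :
    MeasurableSet (dyadicLayer f i) :=
  hf measurableSet_Ico

theorem pairwise_disjoint_dyadicLayer (f : X → ℝ≥0) :
    Pairwise (Function.onFun Disjoint (dyadicLayer f)) :=
  fun _ _ hij => Disjoint.preimage f <| by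
    simpa [Function.onFun, Order.succ_eq_add_one] using
      (zpow_right_mono₀ (one_le_two (α := ℝ≥0))).pairwise_disjoint_on_Ico_succ hij

theorem coe_two_zpow (i : ℤ) : ((2 ^ i : ℝ≥0) : ℝ≥0∞) = 2 ^ (i : ℝ) := by
  rw [ENNReal.coe_zpow two_ne_zero, ENNReal.rpow_intCast, ENNReal.coe_ofNat]

theorem two_rpow_le_of_mem_dyadicLayer {x : X} {i : ℤ} (hx : x ∈ dyadicLayer f i) :
    2 ^ (i : ℝ) ≤ (f x : ℝ≥0∞) := by
  rw [← coe_two_zpow]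
  exact ENNReal.coe_le_coe.2 hx.1

theorem le_two_mul_two_rpow_of_mem_dyadicLayer {x : X} {i : ℤ} (hx : x ∈ dyadicLayer f i) :
    (f x : ℝ≥0∞) ≤ 2 * 2 ^ (i : ℝ) := by
  rw [← coe_two_zpow, ← ENNReal.coe_ofNat, ← ENNReal.coe_mul, ← zpow_one_add₀ two_ne_zero,
    add_comm]
  exact ENNReal.coe_le_coe.2 hx.2.le

theorem support_mul_subset_iUnion_dyadicLayer (K : X × X → ℝ≥0∞) :
    (fun z : X × X => (f z.1 : ℝ≥0∞) * f z.2 * K z).support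
      ⊆ ⋃ ij : ℤ × ℤ, dyadicLayer f ij.1 ×ˢ dyadicLayer f ij.2 := by
  intro z hz
  have h1 : f z.1 ≠ 0 := by rintro h; simp [h] at hz
  have h2 : f z.2 ≠ 0 := by rintro h; simp [h] at hz
  obtain ⟨i, hi⟩ := NNReal.exists_mem_Ico_zpow h1 one_lt_two
  obtain ⟨j, hj⟩ := NNReal.exists_mem_Ico_zpow h2 one_lt_two
  exact mem_iUnion.2 ⟨(i, j), hi, hj⟩

variable [MeasurableSpace X]

theorem tsum_two_rpow_mul_measure_dyadicLayer_le {μ : Measure X} (hf : Measurable f) {p : ℝ}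
    (hp : 0 ≤ p) :
    ∑' i : ℤ, 2 ^ (p * i) * μ (dyadicLayer f i) ≤ ∫⁻ x, (f x : ℝ≥0∞) ^ p ∂μ :=
  calc ∑' i : ℤ, 2 ^ (p * i) * μ (dyadicLayer f i)
      ≤ ∑' i : ℤ, ∫⁻ x in dyadicLayer f i, (f x : ℝ≥0∞) ^ p ∂μ := by
        refine ENNReal.tsum_le_tsum fun i => ?_
        rw [← setLIntegral_const]
        refine setLIntegral_mono' (measurableSet_dyadicLayer hf i) fun x hx => ?_
        rw [mul_comm, ENNReal.rpow_mul]
        gcongr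
        exact two_rpow_le_of_mem_dyadicLayer hx
    _ = ∫⁻ x in ⋃ i, dyadicLayer f i, (f x : ℝ≥0∞) ^ p ∂μ :=
        (lintegral_iUnion (measurableSet_dyadicLayer hf) (pairwise_disjoint_dyadicLayer f) _).symm
    _ ≤ ∫⁻ x, (f x : ℝ≥0∞) ^ p ∂μ := setLIntegral_le_lintegral _ _

theorem lintegral_mul_le_tsum_dyadicLayer {ν : Measure (X × X)} (hf : Measurable f)
    (K : X × X → ℝ≥0∞) :
    ∫⁻ z, (f z.1 : ℝ≥0∞) * f z.2 * K z ∂ν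
      ≤ ∑' ij : ℤ × ℤ, 2 * 2 ^ (ij.1 : ℝ) * (2 * 2 ^ (ij.2 : ℝ))
          * ∫⁻ z in dyadicLayer f ij.1 ×ˢ dyadicLayer f ij.2, K z ∂ν := by
  rw [← setLIntegral_eq_of_support_subset (support_mul_subset_iUnion_dyadicLayer K)]
  refine (lintegral_iUnion_le _ _).trans (ENNReal.tsum_le_tsum fun ij => ?_)
  rw [← lintegral_const_mul' _ _ (by finiteness)]
  refine setLIntegral_mono' ((measurableSet_dyadicLayer hf _).prod
    (measurableSet_dyadicLayer hf _)) fun z hz => ?_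
  gcongr
  · exact le_two_mul_two_rpow_of_mem_dyadicLayer hz.1
  · exact le_two_mul_two_rpow_of_mem_dyadicLayer hz.2

end DyadicLayers

def dyadicWeight (δ : ℝ) (k : ℤ) : ℝ≥0∞ := 2 ^ (-(δ * |(k : ℝ)|))

theorem dyadicWeight_neg (δ : ℝ) (k : ℤ) : dyadicWeight δ (-k) = dyadicWeight δ k := by
  rw [dyadicWeight, dyadicWeight, Int.cast_neg, abs_neg]

theorem dyadicWeight_natCast (δ : ℝ) (n : ℕ) : dyadicWeight δ n = (2 ^ (-δ)) ^ n := by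
  rw [dyadicWeight, Int.cast_natCast, Nat.abs_cast, ← ENNReal.rpow_natCast, ← ENNReal.rpow_mul,
    neg_mul]

theorem tsum_dyadicWeight_ne_top {δ : ℝ} (hδ : 0 < δ) : ∑' k, dyadicWeight δ k ≠ ⊤ := by
  have hgeom : ∑' n : ℕ, dyadicWeight δ n ≠ ⊤ := by
    simp_rw [dyadicWeight_natCast, ENNReal.tsum_geometric]
    exact ENNReal.inv_ne_top.2 (tsub_pos_of_lt
      (ENNReal.rpow_lt_one_of_one_lt_of_neg one_lt_two (neg_neg_of_pos hδ))).ne'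
  have hneg : ∑' n : ℕ, dyadicWeight δ (-(n + 1)) ≤ ∑' n : ℕ, dyadicWeight δ n := by
    simp_rw [dyadicWeight_neg]
    exact_mod_cast ENNReal.tsum_comp_le_tsum_of_injective (Nat.succ_injective)
      (fun n : ℕ => dyadicWeight δ n)
  rw [tsum_of_nat_of_neg_add_one ENNReal.summable ENNReal.summable]
  exact ENNReal.add_ne_top.2 ⟨hgeom, ne_top_of_le_ne_top hgeom hneg⟩

theorem tsum_dyadicWeight_mul_add (δ : ℝ) (a : ℤ → ℝ≥0∞) :
    ∑' ij : ℤ × ℤ, dyadicWeight δ (ij.1 - ij.2) * (a ij.1 + a ij.2)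
      = 2 * (∑' k, dyadicWeight δ k) * ∑' i, a i := by
  have hleft : ∀ i : ℤ, ∑' j : ℤ, dyadicWeight δ (i - j) = ∑' k, dyadicWeight δ k :=
    fun i => (Equiv.subLeft i).tsum_eq (dyadicWeight δ)
  have hright : ∀ j : ℤ, ∑' i : ℤ, dyadicWeight δ (i - j) = ∑' k, dyadicWeight δ k :=
    fun j => (Equiv.subRight j).tsum_eq (dyadicWeight δ)
  simp_rw [mul_add]
  rw [ENNReal.tsum_add, ENNReal.tsum_prod', ENNReal.tsum_prod']
  nth_rw 2 [ENNReal.tsum_comm]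
  simp_rw [ENNReal.tsum_mul_right, hleft, hright, ENNReal.tsum_mul_left]
  ring

theorem two_mul_two_rpow_mul_le_dyadicWeight_mul {θ p : ℝ} (hθ : 0 ≤ θ)
    (hp : p * (1 + θ) = 2) {i j : ℤ} (hij : i ≤ j) {C I m n A : ℝ≥0∞}
    (hI : I ≤ C * n * m ^ θ) (hA : 2 ^ (p * i) * m ≤ A) :
    2 * 2 ^ (i : ℝ) * (2 * 2 ^ (j : ℝ)) * I
      ≤ 4 * C * A ^ θ * (dyadicWeight (p - 1) (i - j) * (2 ^ (p * j) * n)) := by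
  have hadd : ∀ x y : ℝ, (2 : ℝ≥0∞) ^ x * 2 ^ y = 2 ^ (x + y) := fun x y =>
    (ENNReal.rpow_add x y two_ne_zero ENNReal.ofNat_ne_top).symm
  have hij' : ((i - j : ℤ) : ℝ) ≤ 0 := by exact_mod_cast sub_nonpos.2 hij
  -- `p θ = 2 - p` redistributes `2 ^ i * 2 ^ j` between the weight and the two layer masses
  have hexp : (2 : ℝ≥0∞) ^ (i : ℝ) * 2 ^ (j : ℝ)
      = 2 ^ (-((p - 1) * |((i - j : ℤ) : ℝ)|) + p * i * θ + p * j) := by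
    rw [hadd, abs_of_nonpos hij']
    congr 1
    push_cast
    linear_combination (-(i : ℝ)) * hp
  calc 2 * 2 ^ (i : ℝ) * (2 * 2 ^ (j : ℝ)) * I
      ≤ 4 * C * (2 ^ (-((p - 1) * |((i - j : ℤ) : ℝ)|) + p * i * θ + p * j) * (m ^ θ * n)) := by
        grw [hI, ← hexp]
        apply le_of_eq
        ring
    _ = 4 * C * (dyadicWeight (p - 1) (i - j) * (2 ^ (p * i) * m) ^ θ * (2 ^ (p * j) * n)) := by
        rw [dyadicWeight, ENNReal.mul_rpow_of_nonneg _ _ hθ, ← ENNReal.rpow_mul, ← hadd, ← hadd]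
        ring
    _ ≤ 4 * C * A ^ θ * (dyadicWeight (p - 1) (i - j) * (2 ^ (p * j) * n)) := by
        grw [hA]
        apply le_of_eq
        ring

theorem setLIntegral_prod_comm {X : Type*} [MeasurableSpace X] {μ : Measure X} [SFinite μ]
    {K : X × X → ℝ≥0∞} (hK : ∀ z, K z.swap = K z) (A B : Set X) :
    ∫⁻ z in A ×ˢ B, K z ∂μ.prod μ = ∫⁻ z in B ×ˢ A, K z ∂μ.prod μ := by
  rw [← Measure.prod_restrict, ← Measure.prod_restrict, ← lintegral_prod_swap]
  simp_rw [hK]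

theorem lintegral_mul_mul_le_of_setLIntegral_prod_le {X : Type*} [MeasurableSpace X]
    {μ : Measure X} [SFinite μ] {K : X × X → ℝ≥0∞} (hK_swap : ∀ z, K z.swap = K z)
    {C : ℝ≥0∞} {θ : ℝ} (hθ0 : 0 ≤ θ)
    (hK : ∀ A B, MeasurableSet A → MeasurableSet B →
      ∫⁻ z in A ×ˢ B, K z ∂μ.prod μ ≤ C * μ A * μ B ^ θ)
    {f : X → ℝ≥0} (hf : Measurable f) :
    ∫⁻ z, (f z.1 : ℝ≥0∞) * f z.2 * K z ∂μ.prod μ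
      ≤ 8 * C * (∑' k, dyadicWeight (2 / (1 + θ) - 1) k)
          * (∫⁻ x, (f x : ℝ≥0∞) ^ (2 / (1 + θ)) ∂μ) ^ (1 + θ) := by
  set p := 2 / (1 + θ)
  have hp : p * (1 + θ) = 2 := div_mul_cancel₀ _ (by linarith)
  set E := dyadicLayer f
  set a : ℤ → ℝ≥0∞ := fun i => 2 ^ (p * i) * μ (E i)
  set A := ∑' i, a i
  -- the exponent `θ` always goes on the lower of the two layers
  have hpair : ∀ ij : ℤ × ℤ, 2 * 2 ^ (ij.1 : ℝ) * (2 * 2 ^ (ij.2 : ℝ))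
      * ∫⁻ z in E ij.1 ×ˢ E ij.2, K z ∂μ.prod μ
      ≤ 4 * C * A ^ θ * (dyadicWeight (p - 1) (ij.1 - ij.2) * (a ij.1 + a ij.2)) := by
    rintro ⟨i, j⟩
    have hE := measurableSet_dyadicLayer hf
    rcases le_total i j with hij | hji
    · refine (two_mul_two_rpow_mul_le_dyadicWeight_mul hθ0 hp hij ?_
        (ENNReal.le_tsum (f := a) i)).trans (by gcongr; exact le_add_self)
      rw [setLIntegral_prod_comm hK_swap]
      exact hK _ _ (hE j) (hE i)
    · rw [mul_comm (2 * 2 ^ (i : ℝ)), ← dyadicWeight_neg, neg_sub]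
      exact (two_mul_two_rpow_mul_le_dyadicWeight_mul hθ0 hp hji (hK _ _ (hE i) (hE j))
        (ENNReal.le_tsum (f := a) j)).trans (by gcongr; exact le_self_add)
  calc ∫⁻ z, (f z.1 : ℝ≥0∞) * f z.2 * K z ∂μ.prod μ
      ≤ ∑' ij : ℤ × ℤ, 2 * 2 ^ (ij.1 : ℝ) * (2 * 2 ^ (ij.2 : ℝ))
          * ∫⁻ z in E ij.1 ×ˢ E ij.2, K z ∂μ.prod μ := lintegral_mul_le_tsum_dyadicLayer hf K
    _ ≤ ∑' ij : ℤ × ℤ,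
          4 * C * A ^ θ * (dyadicWeight (p - 1) (ij.1 - ij.2) * (a ij.1 + a ij.2)) :=
        ENNReal.tsum_le_tsum hpair
    _ = 8 * C * (∑' k, dyadicWeight (p - 1) k) * A ^ (1 + θ) := by
        rw [ENNReal.tsum_mul_left, tsum_dyadicWeight_mul_add,
          ENNReal.rpow_add_of_nonneg _ _ zero_le_one hθ0, ENNReal.rpow_one]
        ring
    _ ≤ 8 * C * (∑' k, dyadicWeight (p - 1) k) * (∫⁻ x, (f x : ℝ≥0∞) ^ p ∂μ) ^ (1 + θ) := by
        gcongr
        exact tsum_two_rpow_mul_measure_dyadicLayer_le hf (by positivity)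

theorem eLpNorm_ofReal_sq {X F : Type*} [MeasurableSpace X] [NormedAddCommGroup F] {μ : Measure X}
    (f : X → F) {p : ℝ} (hp : 0 < p) :
    eLpNorm f (ENNReal.ofReal p) μ ^ 2 = (∫⁻ x, ‖f x‖ₑ ^ p ∂μ) ^ (2 / p) := by
  rw [eLpNorm_eq_lintegral_rpow_enorm_toReal (by simpa using hp) ENNReal.ofReal_ne_top,
    ENNReal.toReal_ofReal hp.le, ← ENNReal.rpow_natCast, ← ENNReal.rpow_mul]
  congr 1
  field_simp
  norm_num

theorem lintegral_enorm_mul_enorm_mul_congr_ae {X F : Type*} [MeasurableSpace X]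
    [NormedAddCommGroup F] {μ : Measure X} {f g : X → F} (hfg : f =ᵐ[μ] g)
    (K : X × X → ℝ≥0∞) :
    ∫⁻ z, ‖f z.1‖ₑ * ‖f z.2‖ₑ * K z ∂μ.prod μ = ∫⁻ z, ‖g z.1‖ₑ * ‖g z.2‖ₑ * K z ∂μ.prod μ := by
  refine lintegral_congr_ae ?_
  filter_upwards [Measure.quasiMeasurePreserving_fst.ae_eq_comp hfg,
    Measure.quasiMeasurePreserving_snd.ae_eq_comp hfg] with z h1 h2
  simp only [Function.comp_apply] at h1 h2
  rw [h1, h2]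

theorem exists_lintegral_enorm_mul_enorm_mul_edist_rpow_neg_le {X F : Type*} [MetricSpace X]
    [MeasurableSpace X] [OpensMeasurableSpace X] [NormedAddCommGroup F] {μ : Measure X} [SFinite μ]
    [NullSingletonClass μ] {V : ℝ≥0} {d s : ℝ}
    (hμ : IsUpperAhlforsRegular μ V d) (hV : V ≠ 0) (hs : 0 < s) (hsd : s < d) :
    ∃ C : ℝ≥0, ∀ f : X → F, AEStronglyMeasurable f μ →
      ∫⁻ z, ‖f z.1‖ₑ * ‖f z.2‖ₑ * edist z.1 z.2 ^ (-s) ∂μ.prod μ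
        ≤ C * eLpNorm f (ENNReal.ofReal (2 / (2 - s / d))) μ ^ 2 := by
  have hsd_pos : 0 < s / d := div_pos hs (hs.trans hsd)
  have hsd_lt_one : s / d < 1 := (div_lt_one (hs.trans hsd)).2 hsd
  set θ := 1 - s / d
  have hp : 2 / (2 - s / d) = 2 / (1 + θ) := by ring
  have hpθ : 2 / (2 / (1 + θ)) = 1 + θ := by field_simp
  set Cset : ℝ≥0∞ := (2 ^ s * (1 - 2 ^ (s - d))⁻¹ + 1) * V ^ (s / d)
  set W := ∑' k, dyadicWeight (2 / (1 + θ) - 1) k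
  have hCset : Cset ≠ ⊤ := by
    have hgeom : (1 - (2 : ℝ≥0∞) ^ (s - d))⁻¹ ≠ ⊤ := ENNReal.inv_ne_top.2 (tsub_pos_of_lt
      (ENNReal.rpow_lt_one_of_one_lt_of_neg one_lt_two (by linarith))).ne'
    finiteness
  have hW : W ≠ ⊤ := tsum_dyadicWeight_ne_top (by
    rw [sub_pos, lt_div_iff₀ (by linarith)]
    linarith)
  refine ⟨(8 * Cset * W).toNNReal, fun f hf => ?_⟩
  have hfg := hf.ae_eq_mk
  have hg : Measurable fun x => ‖hf.mk f x‖₊ := hf.stronglyMeasurable_mk.nnnorm.measurable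
  calc ∫⁻ z, ‖f z.1‖ₑ * ‖f z.2‖ₑ * edist z.1 z.2 ^ (-s) ∂μ.prod μ
      = ∫⁻ z, (‖hf.mk f z.1‖₊ : ℝ≥0∞) * ‖hf.mk f z.2‖₊ * edist z.1 z.2 ^ (-s) ∂μ.prod μ :=
        lintegral_enorm_mul_enorm_mul_congr_ae hfg _
    _ ≤ 8 * Cset * W * (∫⁻ x, (‖hf.mk f x‖₊ : ℝ≥0∞) ^ (2 / (1 + θ)) ∂μ) ^ (1 + θ) :=
        lintegral_mul_mul_le_of_setLIntegral_prod_le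
          (fun z => by rw [Prod.fst_swap, Prod.snd_swap, edist_comm]) (sub_nonneg.2 hsd_lt_one.le)
          (fun A B _ _ => setLIntegral_prod_edist_rpow_neg_le hμ hV hs.le hsd A B) hg
    _ = (8 * Cset * W).toNNReal * eLpNorm f (ENNReal.ofReal (2 / (2 - s / d))) μ ^ 2 := by
        rw [ENNReal.coe_toNNReal (by finiteness), eLpNorm_congr_ae hfg, hp,
          eLpNorm_ofReal_sq _ (by positivity), hpθ]
        rfl

theorem exists_lintegral_enorm_mul_enorm_mul_edist_rpow_neg_le_addHaar {E F : Type*}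
    [NormedAddCommGroup E] [NormedSpace ℝ E] [FiniteDimensional ℝ E] [MeasurableSpace E]
    [BorelSpace E] [NormedAddCommGroup F] (μ : Measure E) [μ.IsAddHaarMeasure] {s : ℝ}
    (hs : 0 < s) (hsn : s < Module.finrank ℝ E) :
    ∃ C : ℝ≥0, ∀ f : E → F, AEStronglyMeasurable f μ →
      ∫⁻ z, ‖f z.1‖ₑ * ‖f z.2‖ₑ * edist z.1 z.2 ^ (-s) ∂μ.prod μ
        ≤ C * eLpNorm f (ENNReal.ofReal (2 / (2 - s / Module.finrank ℝ E))) μ ^ 2 := by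
  have : Nontrivial E := Module.nontrivial_of_finrank_pos (R := ℝ) (Nat.cast_pos.1 (hs.trans hsn))
  refine exists_lintegral_enorm_mul_enorm_mul_edist_rpow_neg_le (V := (μ (ball 0 1)).toNNReal)
    (fun y r hr => ?_) ?_ hs hsn
  · rw [Measure.addHaar_closedBall μ y hr.le, ENNReal.coe_toNNReal measure_ball_lt_top.ne,
      ENNReal.ofReal_pow hr.le, ← ENNReal.rpow_natCast, mul_comm]
  · exact ENNReal.toNNReal_ne_zero.2 ⟨(measure_ball_pos μ 0 one_pos).ne', measure_ball_lt_top.ne⟩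

theorem ofReal_abs_mul_abs_div_norm_sub_le {E : Type*} [NormedAddCommGroup E] (a b : ℝ)
    (x y : E) :
    ENNReal.ofReal (|a| * |b| / ‖x - y‖) ≤ ‖a‖ₑ * ‖b‖ₑ * edist x y ^ (-1 : ℝ) := by
  rcases eq_or_ne x y with rfl | hxy
  · simp
  rw [ENNReal.rpow_neg_one, edist_dist, dist_eq_norm,
    ENNReal.ofReal_div_of_pos (norm_pos_iff.2 (sub_ne_zero.2 hxy)),
    ENNReal.ofReal_mul (abs_nonneg a), Real.enorm_eq_ofReal_abs, Real.enorm_eq_ofReal_abs,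
    div_eq_mul_inv]

/-- Hardy–Littlewood–Sobolev for the Coulomb kernel: if `ρ ∈ L^{6/5}(ℝ³)` then the Coulomb
self-energy `(1/2)∫∫ |ρ(x)||ρ(y)|/|x−y| dx dy` is finite and bounded by a universal constant
times `‖ρ‖_{6/5}²`. -/
theorem coulomb_selfEnergy_le_HLS :
    ∃ C : ℝ, 0 < C ∧ ∀ ρ : E3 → ℝ, MemLp ρ (ENNReal.ofReal (6/5)) →
      (1/2) * ∫⁻ x : E3, ∫⁻ y : E3, ENNReal.ofReal (|ρ x| * |ρ y| / ‖x - y‖)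
        ≤ ENNReal.ofReal C * (eLpNorm ρ (ENNReal.ofReal (6/5)) volume) ^ 2 := by
  obtain ⟨C, hC⟩ := exists_lintegral_enorm_mul_enorm_mul_edist_rpow_neg_le_addHaar (F := ℝ)
    (volume : Measure E3) one_pos (by simp)
  refine ⟨C + 1, by positivity, fun ρ hρ => ?_⟩
  have hp : 2 / (2 - 1 / (Module.finrank ℝ E3 : ℝ)) = 6 / 5 := by norm_num
  have hmeas : AEMeasurable (fun z : E3 × E3 => ‖ρ z.1‖ₑ * ‖ρ z.2‖ₑ * edist z.1 z.2 ^ (-1 : ℝ))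
      (volume.prod volume) :=
    (hρ.1.enorm.comp_fst.mul hρ.1.enorm.comp_snd).mul
      (continuous_edist.measurable.pow_const _).aemeasurable
  calc (1/2) * ∫⁻ x : E3, ∫⁻ y : E3, ENNReal.ofReal (|ρ x| * |ρ y| / ‖x - y‖)
      ≤ ∫⁻ x : E3, ∫⁻ y : E3, ‖ρ x‖ₑ * ‖ρ y‖ₑ * edist x y ^ (-1 : ℝ) :=
        (mul_le_of_le_one_left' ENNReal.half_le_self).trans <| lintegral_mono fun x =>
          lintegral_mono fun y => ofReal_abs_mul_abs_div_norm_sub_le _ _ x y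
    _ = ∫⁻ z, ‖ρ z.1‖ₑ * ‖ρ z.2‖ₑ * edist z.1 z.2 ^ (-1 : ℝ) ∂volume.prod volume :=
        (lintegral_prod _ hmeas).symm
    _ ≤ C * eLpNorm ρ (ENNReal.ofReal (6 / 5)) volume ^ 2 := hp ▸ hC ρ hρ.1
    _ ≤ ENNReal.ofReal (C + 1) * eLpNorm ρ (ENNReal.ofReal (6 / 5)) volume ^ 2 := by
        rw [← ENNReal.ofReal_coe_nnreal]
        gcongr
        linarith
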